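/- Let R be a commutative ring, A an m×m matrix over R, D an n×n matrix over R, and let B (m×n) and C (n×m) be matrices over R all of whose entries are nilpotent. Then det (Matrix.fromBlocks A B C D) − det A * det D is a nilpotent element of R. -/
import Mathlib


/-- If the off-diagonal blocks `B, C` have nilpotent entries, then
`det (fromBlocks A B C D) - det A * det D` is nilpotent. -/
theorem fromBlocks_det_sub_det_mul_det_isNilpotent
    (R : Type*) [CommRing R] (m n : ℕ)
    (A : Matrix (Fin m) (Fin m) R) (D : Matrix (Fin n) (Fin n) R)
    (B : Matrix (Fin m) (Fin n) R) (C : Matrix (Fin n) (Fin m) R)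
    (hB : ∀ i j, IsNilpotent (B i j)) (hC : ∀ i j, IsNilpotent (C i j)) :
    IsNilpotent ((Matrix.fromBlocks A B C D).det - A.det * D.det) := by
  rw [← mem_nilradical, ← Ideal.Quotient.eq_zero_iff_mem]
  set φ := Ideal.Quotient.mk (nilradical R)
  have hB0 : B.map φ = 0 := by
    ext i j
    simpa [φ, Ideal.Quotient.eq_zero_iff_mem, mem_nilradical] using hB i j
  have hC0 : C.map φ = 0 := by
    ext i j
    simpa [φ, Ideal.Quotient.eq_zero_iff_mem, mem_nilradical] using hC i j
  have : φ ((Matrix.fromBlocks A B C D).det - A.det * D.det)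
      = ((Matrix.fromBlocks A B C D).map φ).det - (A.map φ).det * (D.map φ).det := by
    simp [RingHom.map_det]
  rw [this, Matrix.fromBlocks_map, hB0, hC0,
    Matrix.det_fromBlocks_zero₂₁, sub_self]
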